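/- arXiv:2112.10400 — 3 statements merged into one kernel-verified Lean document; each statement's English description precedes it below -/
import Mathlib

section
/- With T and γ* as in the fixed-point setup, if 0 < γ < γ* then T(γ) − γ* ≥ γ − γ*, assuming γ*/E[max(D,γ*)] ≤ 1. -/
/-!
Below γ* the threshold policy `max(D, γ)` can be compared pointwise with `max(D, γ*)`:
`½ max(D,γ*)² ≤ ½ max(D,γ)² + γ* (max(D,γ*) − max(D,γ))`, the defect being `½ (γ* − max(D,γ))²` on
`{D < γ*}` and zero elsewhere. Taking expectations and using the fixed-point equation for γ* gives
`γ* E[max(D,γ)] ≤ E[½ max(D,γ)² + C]`, i.e. `T(γ) ≥ γ* > γ`.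
-/

open MeasureTheory

lemma half_sq_max_le_half_sq_max_add {d γ γ' : ℝ} (h : γ ≤ γ') :
    1 / 2 * max d γ' ^ 2 ≤ 1 / 2 * max d γ ^ 2 + γ' * (max d γ' - max d γ) := by
  rcases le_total d γ' with hd | hd
  · rw [max_eq_right hd]
    nlinarith [sq_nonneg (max d γ - γ')]
  · rw [max_eq_left hd, max_eq_left (h.trans hd)]
    simp

section

variable {Ω : Type*} [MeasurableSpace Ω] {μ : Measure Ω} [IsFiniteMeasure μ] {D : Ω → ℝ}

lemma MeasureTheory.MemLp.max_const (hD : MemLp D 2 μ) (c : ℝ) : MemLp (fun ω => max (D ω) c) 2 μ :=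
  hD.sup (memLp_const c)

lemma mul_integral_max_le_integral_half_sq_max (hD : MemLp D 2 μ) (C : ℝ) {γ γ' : ℝ}
    (h : γ ≤ γ')
    (hfix : ∫ ω, 1 / 2 * max (D ω) γ' ^ 2 + C ∂μ = γ' * ∫ ω, max (D ω) γ' ∂μ) :
    γ' * ∫ ω, max (D ω) γ ∂μ ≤ ∫ ω, 1 / 2 * max (D ω) γ ^ 2 + C ∂μ := by
  have hmax (c : ℝ) : Integrable (fun ω => max (D ω) c) μ :=
    (hD.max_const c).integrable one_le_two
  have hcost (c : ℝ) : Integrable (fun ω => 1 / 2 * max (D ω) c ^ 2 + C) μ :=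
    ((hD.max_const c).integrable_sq.const_mul _).add (integrable_const C)
  have hgap : Integrable (fun ω => γ' * (max (D ω) γ' - max (D ω) γ)) μ :=
    ((hmax γ').sub (hmax γ)).const_mul γ'
  have hcomp : ∫ ω, 1 / 2 * max (D ω) γ' ^ 2 + C ∂μ ≤
      ∫ ω, (1 / 2 * max (D ω) γ ^ 2 + C) + γ' * (max (D ω) γ' - max (D ω) γ) ∂μ :=
    integral_mono (hcost γ') ((hcost γ).add hgap)
      fun ω => by linarith [half_sq_max_le_half_sq_max_add (d := D ω) h]
  rw [integral_add (hcost γ) hgap, integral_const_mul,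
    integral_sub (hmax γ') (hmax γ), hfix] at hcomp
  linarith

end

theorem stmt6_general {Ω : Type*} [MeasurableSpace Ω] (μ : Measure Ω) [IsProbabilityMeasure μ]
    (D : Ω → ℝ) (C γ γstar : ℝ)
    (hDmeas : Measurable D)
    (hD2 : Integrable (fun ω => (D ω) ^ 2) μ)
    (hfix : ∫ ω, (1 / 2) * (max (D ω) γstar) ^ 2 + C ∂μ =
      γstar * ∫ ω, max (D ω) γstar ∂μ)
    (hγpos : 0 < γ) (hγ : γ < γstar) :
    γ - γstar ≤
      (∫ ω, (1 / 2) * (max (D ω) γ) ^ 2 + C ∂μ) / (∫ ω, max (D ω) γ ∂μ) - γstar := by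
  have hD : MemLp D 2 μ := (memLp_two_iff_integrable_sq hDmeas.aestronglyMeasurable).2 hD2
  have hγ_le : γ ≤ ∫ ω, max (D ω) γ ∂μ := by
    simpa using integral_mono (integrable_const γ) ((hD.max_const γ).integrable one_le_two)
      fun ω => le_max_right (D ω) γ
  have hbound := mul_integral_max_le_integral_half_sq_max hD C hγ.le hfix
  have hT : γstar ≤ (∫ ω, 1 / 2 * max (D ω) γ ^ 2 + C ∂μ) / ∫ ω, max (D ω) γ ∂μ :=
    (le_div_iff₀ (hγpos.trans_le hγ_le)).2 (by linarith)
  linarith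

theorem stmt6 {Ω : Type*} [MeasurableSpace Ω] (μ : Measure Ω) [IsProbabilityMeasure μ]
    (D : Ω → ℝ) (C γ γstar : ℝ)
    (hDmeas : Measurable D) (hDnn : ∀ᵐ ω ∂μ, 0 ≤ D ω)
    (hD2 : Integrable (fun ω => (D ω) ^ 2) μ)
    (hDpos : 0 < ∫ ω, D ω ∂μ) (hC : 0 ≤ C)
    (hfix : ∫ ω, (1 / 2) * (max (D ω) γstar) ^ 2 + C ∂μ =
      γstar * ∫ ω, max (D ω) γstar ∂μ)
    (hle : γstar ≤ ∫ ω, max (D ω) γstar ∂μ)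
    (hγpos : 0 < γ) (hγ : γ < γstar) :
    γ - γstar ≤
      (∫ ω, (1 / 2) * (max (D ω) γ) ^ 2 + C ∂μ) / (∫ ω, max (D ω) γ ∂μ) - γstar :=
  stmt6_general μ D C γ γstar hDmeas hD2 hfix hγpos hγ
end

section
/- Let D be a nonnegative random variable with finite second moment, C ≥ 0, and γ* the fixed point of T(γ) = E[(1/2)max(D,γ)²+C]/E[max(D,γ)]. Then for any γ ∈ ℝ, the one-step drift satisfies E[(1/2)max(D,γ)² + C − γ·max(D,γ)] ≤ (γ* − γ)·E[max(D,γ*)]. -/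
open MeasureTheory

/-!
For `ℓ ≥ d`, the quadratic `ℓ ↦ ℓ² / 2 - γ ℓ` is minimised on `[d, ∞)` at `ℓ = max d γ`; hence,
pointwise, replacing `max D γ` by `max D γ*` can only increase the integrand. Integrating and
using the fixed-point identity for `γ*` turns the integral of the larger integrand into `(γ* - γ) E[max D γ*]`.
-/

lemma half_sq_sub_mul_max_le {d a ℓ : ℝ} (hdℓ : d ≤ ℓ) :
    1 / 2 * max d a ^ 2 - a * max d a ≤ 1 / 2 * ℓ ^ 2 - a * ℓ := by
  rcases max_cases d a with ⟨h, _⟩ | ⟨h, _⟩ <;> rw [h]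
  · nlinarith
  · nlinarith [sq_nonneg (ℓ - a)]

namespace MeasureTheory.MemLp

variable {Ω : Type*} [MeasurableSpace Ω] {μ : Measure Ω} [IsFiniteMeasure μ] {X : Ω → ℝ}

lemma max_const_s15 (hX : MemLp X 2 μ) (c : ℝ) : MemLp (fun ω => max (X ω) c) 2 μ :=
  hX.sup (memLp_const c)

lemma integrable_half_sq_add_sub_mul (hX : MemLp X 2 μ) (C a : ℝ) :
    Integrable (fun ω => 1 / 2 * X ω ^ 2 + C - a * X ω) μ :=
  ((hX.integrable_sq.const_mul _).add (integrable_const C)).sub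
    ((hX.integrable one_le_two).const_mul a)

lemma integral_half_sq_add_sub_mul (hX : MemLp X 2 μ) (C a : ℝ) :
    ∫ ω, 1 / 2 * X ω ^ 2 + C - a * X ω ∂μ = (∫ ω, 1 / 2 * X ω ^ 2 + C ∂μ) - a * ∫ ω, X ω ∂μ := by
  have hsq : Integrable (fun ω => 1 / 2 * X ω ^ 2 + C) μ :=
    (hX.integrable_sq.const_mul _).add (integrable_const C)
  rw [integral_sub hsq ((hX.integrable one_le_two).const_mul a), integral_const_mul]

end MeasureTheory.MemLp

theorem stmt15_general {Ω : Type*} [MeasurableSpace Ω] (μ : Measure Ω) [IsProbabilityMeasure μ]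
    (D : Ω → ℝ) (C γ γstar : ℝ)
    (hDmeas : Measurable D)
    (hD2 : Integrable (fun ω => (D ω) ^ 2) μ)
    (hfix : ∫ ω, (1 / 2) * (max (D ω) γstar) ^ 2 + C ∂μ =
      γstar * ∫ ω, max (D ω) γstar ∂μ) :
    (∫ ω, (1 / 2) * (max (D ω) γ) ^ 2 + C - γ * max (D ω) γ ∂μ) ≤
      (γstar - γ) * ∫ ω, max (D ω) γstar ∂μ := by
  have hD : MemLp D 2 μ := (memLp_two_iff_integrable_sq hDmeas.aestronglyMeasurable).2 hD2
  calc (∫ ω, (1 / 2) * (max (D ω) γ) ^ 2 + C - γ * max (D ω) γ ∂μ)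
      ≤ ∫ ω, (1 / 2) * (max (D ω) γstar) ^ 2 + C - γ * max (D ω) γstar ∂μ := by
        refine integral_mono ((hD.max_const_s15 γ).integrable_half_sq_add_sub_mul C γ)
          ((hD.max_const_s15 γstar).integrable_half_sq_add_sub_mul C γ) fun ω => ?_
        have := half_sq_sub_mul_max_le (a := γ) (le_max_left (D ω) γstar)
        linarith
    _ = (γstar - γ) * ∫ ω, max (D ω) γstar ∂μ := by
        rw [(hD.max_const_s15 γstar).integral_half_sq_add_sub_mul, hfix]
        ring

theorem stmt15 {Ω : Type*} [MeasurableSpace Ω] (μ : Measure Ω) [IsProbabilityMeasure μ]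
    (D : Ω → ℝ) (C γ γstar : ℝ)
    (hDmeas : Measurable D) (hDnn : ∀ᵐ ω ∂μ, 0 ≤ D ω)
    (hD2 : Integrable (fun ω => (D ω) ^ 2) μ) (hC : 0 ≤ C)
    (hfix : ∫ ω, (1 / 2) * (max (D ω) γstar) ^ 2 + C ∂μ =
      γstar * ∫ ω, max (D ω) γstar ∂μ) :
    (∫ ω, (1 / 2) * (max (D ω) γ) ^ 2 + C - γ * max (D ω) γ ∂μ) ≤
      (γstar - γ) * ∫ ω, max (D ω) γstar ∂μ :=
  stmt15_general μ D C γ γstar hDmeas hD2 hfix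
end

section
/- With D, C, γ* as in the drift setup, for any γ ∈ ℝ: E[(1/2)max(D,γ)² + C − γ*·max(D,γ)] ≤ −(γ* − γ)·(E[max(D,γ)] − E[max(D,γ*)]). -/
/-! Since `m ↦ m² / 2 - γ m` is a convex parabola with vertex at `γ`, its minimum over `m ≥ D`
is attained at `max D γ`; as `max D γ* ≥ D`, this gives pointwise
`max(D,γ)²/2 - γ max(D,γ) ≤ max(D,γ*)²/2 - γ max(D,γ*)`. Taking expectations and inserting the
fixed-point equation for `γ*` yields the claim after rearranging. -/

open MeasureTheory

lemma half_sq_sub_mul_max_le_s16 {x m : ℝ} (γ : ℝ) (hxm : x ≤ m) :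
    (1 / 2) * (max x γ) ^ 2 - γ * max x γ ≤ (1 / 2) * m ^ 2 - γ * m := by
  rcases max_cases x γ with ⟨h, _⟩ | ⟨h, _⟩ <;> rw [h] <;> nlinarith [sq_nonneg (m - γ)]

lemma integral_sub_const_mul {Ω : Type*} [MeasurableSpace Ω] {μ : Measure Ω} {f g : Ω → ℝ}
    (hg : Integrable g μ) (hf : Integrable f μ) (a : ℝ) :
    ∫ ω, g ω - a * f ω ∂μ = (∫ ω, g ω ∂μ) - a * ∫ ω, f ω ∂μ := by
  rw [integral_sub hg (hf.const_mul a), integral_const_mul]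

theorem stmt16_general {Ω : Type*} [MeasurableSpace Ω] (μ : Measure Ω) [IsProbabilityMeasure μ]
    (D : Ω → ℝ) (C γ γstar : ℝ)
    (hDmeas : Measurable D)
    (hD2 : Integrable (fun ω => (D ω) ^ 2) μ)
    (hfix : ∫ ω, (1 / 2) * (max (D ω) γstar) ^ 2 + C ∂μ =
      γstar * ∫ ω, max (D ω) γstar ∂μ) :
    (∫ ω, (1 / 2) * (max (D ω) γ) ^ 2 + C - γstar * max (D ω) γ ∂μ) ≤
      -((γstar - γ) * ((∫ ω, max (D ω) γ ∂μ) - ∫ ω, max (D ω) γstar ∂μ)) := by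
  have hD : MemLp D 2 μ := (memLp_two_iff_integrable_sq hDmeas.aestronglyMeasurable).2 hD2
  have hmax (c : ℝ) : MemLp (fun ω => max (D ω) c) 2 μ := hD.sup (memLp_const c)
  have hint (c : ℝ) : Integrable (fun ω => max (D ω) c) μ := (hmax c).integrable one_le_two
  have hintSq (c : ℝ) : Integrable (fun ω => (1 / 2) * (max (D ω) c) ^ 2 + C) μ :=
    ((hmax c).integrable_sq.const_mul _).add (integrable_const C)
  have key : ∫ ω, (1 / 2) * (max (D ω) γ) ^ 2 + C - γ * max (D ω) γ ∂μ ≤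
      ∫ ω, (1 / 2) * (max (D ω) γstar) ^ 2 + C - γ * max (D ω) γstar ∂μ :=
    integral_mono ((hintSq γ).sub ((hint γ).const_mul γ))
      ((hintSq γstar).sub ((hint γstar).const_mul γ)) fun ω => by
        linarith [half_sq_sub_mul_max_le_s16 γ (le_max_left (D ω) γstar)]
  rw [integral_sub_const_mul (hintSq γ) (hint γ)] at key ⊢
  rw [integral_sub_const_mul (hintSq γstar) (hint γstar), hfix] at key
  linear_combination key

theorem stmt16 {Ω : Type*} [MeasurableSpace Ω] (μ : Measure Ω) [IsProbabilityMeasure μ]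
    (D : Ω → ℝ) (C γ γstar : ℝ)
    (hDmeas : Measurable D) (hDnn : ∀ᵐ ω ∂μ, 0 ≤ D ω)
    (hD2 : Integrable (fun ω => (D ω) ^ 2) μ) (hC : 0 ≤ C)
    (hfix : ∫ ω, (1 / 2) * (max (D ω) γstar) ^ 2 + C ∂μ =
      γstar * ∫ ω, max (D ω) γstar ∂μ) :
    (∫ ω, (1 / 2) * (max (D ω) γ) ^ 2 + C - γstar * max (D ω) γ ∂μ) ≤
      -((γstar - γ) * ((∫ ω, max (D ω) γ ∂μ) - ∫ ω, max (D ω) γstar ∂μ)) :=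
  stmt16_general μ D C γ γstar hDmeas hD2 hfix
end
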